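/- arXiv:2204.10136 — 9 statements merged into one kernel-verified Lean document; each statement's English description precedes it below -/
import Mathlib

section
/- For all natural numbers n, the sequence defined by a_0 = 0 and a_n = (n/2)·a_{n-1} + (n-1)! for n ≥ 1 satisfies a_n = (n!/2^n) · ∑_{k=1}^{n} 2^k/k. -/
/-- The rational sequence `a₀ = 0`, `aₙ = (n/2)·aₙ₋₁ + (n-1)!`. -/
noncomputable def a : ℕ → ℚ
  | 0 => 0
  | n + 1 => ((n + 1 : ℕ) : ℚ) / 2 * a n + (Nat.factorial n : ℚ)

open Finset in
theorem stmt_0 (n : ℕ) :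
    a n = ((Nat.factorial n : ℚ) / 2 ^ n) * ∑ k ∈ Finset.Icc 1 n, (2 ^ k / (k : ℚ)) := by
  induction n with
  | zero => simp [a]
  | succ n ih =>
    rw [a, ih, sum_Icc_succ_top (Nat.le_add_left 1 n), Nat.factorial_succ]
    push_cast
    field_simp
    ring
end

section
/- For every natural number n, a_n = (-1)^{n-1} · ∑_{k=0}^{n} G_k · s(n,k), where G_k are the Genocchi numbers and s(n,k) are the Stirling numbers of the first kind. -/
/-- Genocchi numbers, defined by the EGF `2x/(eˣ+1) = ∑ Gₙ xⁿ/n!`. -/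
noncomputable def genocchi (n : ℕ) : ℚ :=
  (Nat.factorial n : ℚ) *
    PowerSeries.coeff (R := ℚ) n (2 * PowerSeries.X * (PowerSeries.exp ℚ + 1)⁻¹)

open Finset Polynomial in
/-- Signed Stirling numbers of the first kind: `s n k` is the coefficient of `X^k`
in `X(X-1)⋯(X-n+1)`. -/
noncomputable def stirlingFst (n k : ℕ) : ℤ :=
  (∏ i ∈ Finset.range n, (Polynomial.X - Polynomial.C (i : ℤ))).coeff k

/-!
Let `L` be the linear functional on `ℚ[X]` with `L (Xᵏ) = Gₖ`, so that the right-hand side is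
`(-1)ⁿ⁻¹ · L (X)ₙ` with `(X)ₙ = X(X-1)⋯(X-n+1)`. Comparing coefficients in
`(eˣ + 1) · 2x/(eˣ + 1) = 2x` gives `L (p(X + 1)) + L p = 2 p'(0)`. For `p = X · (X)ₘ₊₁` we have
`p(X + 1) = (X + 1)² (X)ₘ`, and expanding both in falling factorials yields
`2 Sₘ₊₂ + (3m + 4) Sₘ₊₁ + (m + 1)² Sₘ = 0` for `Sₙ = L (X)ₙ`. The sequence `(-1)ⁿ⁺¹ aₙ` satisfies
the same recurrence with the same initial values.
-/

open Polynomial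

lemma a_add_two (m : ℕ) :
    2 * a (m + 2) = (3 * m + 4) * a (m + 1) - (m + 1) ^ 2 * a m := by
  have h₂ : a (m + 2) = (m + 2) / 2 * a (m + 1) + (m + 1).factorial := by
    rw [a]; push_cast; ring
  have h₁ : a (m + 1) = (m + 1) / 2 * a m + m.factorial := by
    rw [a]; push_cast; ring
  rw [h₂, Nat.factorial_succ, Nat.cast_mul, h₁]
  push_cast
  ring

noncomputable def genocchiEGF : PowerSeries ℚ :=
  2 * PowerSeries.X * (PowerSeries.exp ℚ + 1)⁻¹

lemma genocchi_eq_factorial_mul_coeff (n : ℕ) :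
    genocchi n = n.factorial * PowerSeries.coeff n genocchiEGF :=
  rfl

lemma genocchiEGF_mul_exp_add_one :
    genocchiEGF * (PowerSeries.exp ℚ + 1) = 2 * PowerSeries.X := by
  rw [genocchiEGF, mul_assoc, PowerSeries.inv_mul_cancel, mul_one]
  simp [PowerSeries.constantCoeff_exp]

lemma sum_genocchi_mul_choose_add_genocchi (n : ℕ) :
    ∑ j ∈ Finset.range (n + 1), genocchi j * n.choose j + genocchi n =
      if n = 1 then 2 else 0 := by
  have h := congrArg (fun φ => (n.factorial : ℚ) * PowerSeries.coeff n φ)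
    genocchiEGF_mul_exp_add_one
  simp only [mul_add, mul_one, map_add] at h
  rw [← genocchi_eq_factorial_mul_coeff, PowerSeries.coeff_mul,
    Finset.Nat.sum_antidiagonal_eq_sum_range_succ_mk, Finset.mul_sum] at h
  convert h using 2
  · refine Finset.sum_congr rfl fun j hj => ?_
    rw [Nat.cast_choose ℚ (Finset.mem_range_succ_iff.mp hj), PowerSeries.coeff_exp,
      genocchi_eq_factorial_mul_coeff]
    simp only [Algebra.algebraMap_self, one_div, map_inv₀, map_natCast]
    field_simp
  · rw [show (2 : PowerSeries ℚ) = PowerSeries.C 2 from (map_ofNat _ 2).symm,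
      PowerSeries.coeff_C_mul, PowerSeries.coeff_X]
    split_ifs with hn <;> simp [hn]

lemma genocchi_zero : genocchi 0 = 0 := by
  simp [genocchi]

lemma genocchi_one : genocchi 1 = 1 := by
  have h := sum_genocchi_mul_choose_add_genocchi 1
  rw [Finset.sum_range_succ, Finset.sum_range_one, genocchi_zero, if_pos rfl] at h
  norm_num at h
  linarith

noncomputable def genocchiFunctional : ℚ[X] →ₗ[ℚ] ℚ :=
  Polynomial.lsum fun k => genocchi k • LinearMap.id

lemma genocchiFunctional_monomial (k : ℕ) (c : ℚ) :
    genocchiFunctional (monomial k c) = genocchi k * c := by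
  simp [genocchiFunctional]

lemma genocchiFunctional_eq_sum_range (p : ℚ[X]) {n : ℕ} (hp : p.natDegree < n) :
    genocchiFunctional p = ∑ k ∈ Finset.range n, genocchi k * p.coeff k :=
  sum_over_range' p (fun k => mul_zero (genocchi k)) n hp

lemma genocchiFunctional_comp_X_add_one_add (p : ℚ[X]) :
    genocchiFunctional (p.comp (X + 1)) + genocchiFunctional p = 2 * p.coeff 1 := by
  induction p using Polynomial.induction_on' with
  | add p q hp hq =>
    rw [add_comp, map_add, map_add, coeff_add]
    linarith
  | monomial n c =>
    have hdeg : ((X + 1 : ℚ[X]) ^ n).natDegree < n + 1 := by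
      rw [natDegree_pow, ← C_1, natDegree_X_add_C]; omega
    rw [monomial_comp, ← smul_eq_C_mul, map_smul, genocchiFunctional_eq_sum_range _ hdeg,
      genocchiFunctional_monomial, coeff_monomial]
    simp only [coeff_X_add_one_pow, smul_eq_mul]
    rw [mul_comm (genocchi n), ← mul_add, sum_genocchi_mul_choose_add_genocchi]
    split_ifs <;> ring

section descPochhammer

variable (R : Type*) [CommRing R]

lemma descPochhammer_succ_comp_X_add_one (n : ℕ) :
    (descPochhammer R (n + 1)).comp (X + 1) = (X + 1) * descPochhammer R n := by
  rw [descPochhammer_succ_left, mul_comp, X_comp, comp_assoc, sub_comp, X_comp, one_comp,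
    add_sub_cancel_right, comp_X]

lemma X_mul_descPochhammer (n : ℕ) :
    X * descPochhammer R n = descPochhammer R (n + 1) + (n : R[X]) * descPochhammer R n := by
  rw [descPochhammer_succ_right]
  ring

end descPochhammer

lemma stirlingFst_eq_coeff_descPochhammer (n k : ℕ) :
    stirlingFst n k = (descPochhammer ℤ n).coeff k := by
  rw [stirlingFst]
  congr 1
  induction n with
  | zero => simp
  | succ n ih => rw [Finset.prod_range_succ, ih, descPochhammer_succ_right, C_eq_natCast]

lemma sum_genocchi_mul_stirlingFst (n : ℕ) :
    ∑ k ∈ Finset.range (n + 1), genocchi k * (stirlingFst n k : ℚ) =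
      genocchiFunctional (descPochhammer ℚ n) := by
  rw [genocchiFunctional_eq_sum_range _ (n := n + 1) (by simp),
    ← descPochhammer_map (Int.castRingHom ℚ)]
  simp only [coeff_map, stirlingFst_eq_coeff_descPochhammer, eq_intCast]

lemma genocchiFunctional_descPochhammer_add_two (m : ℕ) :
    2 * genocchiFunctional (descPochhammer ℚ (m + 2)) +
      (3 * m + 4) * genocchiFunctional (descPochhammer ℚ (m + 1)) +
      (m + 1) ^ 2 * genocchiFunctional (descPochhammer ℚ m) = 0 := by
  have h := genocchiFunctional_comp_X_add_one_add (X * descPochhammer ℚ (m + 1))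
  rw [coeff_X_mul _ 0, coeff_zero_eq_eval_zero, descPochhammer_ne_zero_eval_zero _ m.succ_ne_zero,
    mul_zero] at h
  have hcomp : (X * descPochhammer ℚ (m + 1)).comp (X + 1) =
      (X + 1) * ((X + 1) * descPochhammer ℚ m) := by
    rw [mul_comp, X_comp, descPochhammer_succ_comp_X_add_one]
  have hexpand : (X + 1) * ((X + 1) * descPochhammer ℚ m) + X * descPochhammer ℚ (m + 1) =
      (2 : ℚ) • descPochhammer ℚ (m + 2) + (3 * m + 4 : ℚ) • descPochhammer ℚ (m + 1) +
        ((m + 1) ^ 2 : ℚ) • descPochhammer ℚ m := by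
    have h₁ := X_mul_descPochhammer ℚ (m + 1)
    push_cast at h₁
    simp only [Algebra.smul_def, algebraMap_eq, map_add, map_mul, map_pow, map_natCast,
      map_ofNat, map_one]
    linear_combination (X + m + 2) * X_mul_descPochhammer ℚ m + 2 * h₁
  rw [hcomp, ← map_add, hexpand] at h
  simpa only [map_add, map_smul, smul_eq_mul] using h

lemma genocchiFunctional_descPochhammer (n : ℕ) :
    genocchiFunctional (descPochhammer ℚ n) = (-1) ^ (n + 1) * a n := by
  induction n using Nat.twoStepInduction with
  | zero => rw [descPochhammer_zero, ← monomial_zero_one, genocchiFunctional_monomial,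
      genocchi_zero, a, zero_mul, mul_zero]
  | one => rw [descPochhammer_one, ← monomial_one_one_eq_X, genocchiFunctional_monomial,
      genocchi_one, a, a]; norm_num
  | more m ih₀ ih₁ =>
    have h := genocchiFunctional_descPochhammer_add_two m
    rw [ih₀, ih₁] at h
    linear_combination h / 2 - (-1) ^ (m + 1) / 2 * a_add_two m

open Finset in
theorem stmt_1 (n : ℕ) :
    a n = (-1 : ℚ) ^ (n - 1) * ∑ k ∈ Finset.range (n + 1), genocchi k * (stirlingFst n k : ℚ) := by
  rw [sum_genocchi_mul_stirlingFst, genocchiFunctional_descPochhammer]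
  cases n with
  | zero => simp [a]
  | succ m =>
    rw [add_tsub_cancel_right, ← mul_assoc, ← pow_add, Even.neg_one_pow ⟨m + 1, by ring⟩, one_mul]
end

section
/- Every term of the sequence (a_n) defined by a_0 = 0 and a_n = (n/2)·a_{n-1} + (n-1)! is an integer. -/
open Finset Finset.Nat
open scoped Nat

theorem Finset.Nat.sum_antidiagonal_add_two {M : Type*} [AddCommMonoid M] {n : ℕ}
    {f : ℕ × ℕ → M} :
    ∑ p ∈ antidiagonal (n + 2), f p =
      f (0, n + 2) + f (n + 2, 0) + ∑ p ∈ antidiagonal n, f (p.1 + 1, p.2 + 1) := by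
  rw [sum_antidiagonal_succ, sum_antidiagonal_succ']
  exact (add_assoc _ _ _).symm

theorem sum_antidiagonal_neg_one_pow_mul_choose_mul_four_pow {R : Type*} [CommRing R] (n : ℕ) :
    ∑ p ∈ antidiagonal n, (-1) ^ p.2 * (p.1.choose p.2 : R) * 4 ^ p.1 = (n + 1) * 2 ^ n := by
  induction n using Nat.twoStepInduction with
  | zero => simp
  | one => norm_num [sum_antidiagonal_succ]
  | more n ih ih' =>
    rw [sum_antidiagonal_succ'] at ih'
    have pascal : ∀ p ∈ antidiagonal n,
        (-1) ^ (p.2 + 1) * ((p.1 + 1).choose (p.2 + 1) : R) * 4 ^ (p.1 + 1) =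
          -4 * ((-1) ^ p.2 * (p.1.choose p.2 : R) * 4 ^ p.1) +
            4 * ((-1) ^ (p.2 + 1) * (p.1.choose (p.2 + 1) : R) * 4 ^ p.1) := by
      intro p _
      rw [Nat.choose_succ_succ']
      push_cast
      ring
    rw [sum_antidiagonal_add_two, sum_congr rfl pascal, sum_add_distrib, ← mul_sum, ← mul_sum, ih]
    simp only [Nat.choose_zero_succ, Nat.choose_zero_right] at ih' ⊢
    push_cast at ih' ⊢
    linear_combination 4 * ih'

theorem sum_antidiagonal_neg_one_pow_mul_choose_succ_mul_four_pow_div (n : ℕ) :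
    ∑ p ∈ antidiagonal n,
        (-1) ^ p.2 * ((p.1 + 1).choose (p.2 + 1) : ℚ) * 4 ^ (p.1 + 1) / (p.1 + 1) =
      (4 ^ (n + 2) - 2 ^ (n + 3)) / (n + 2) := by
  have absorb : ∀ p ∈ antidiagonal n,
      (n + 2) * ((-1) ^ p.2 * ((p.1 + 1).choose (p.2 + 1) : ℚ) * 4 ^ (p.1 + 1) / (p.1 + 1)) =
        -((-1) ^ (p.2 + 1) * ((p.1 + 1).choose (p.2 + 1) : ℚ) * 4 ^ (p.1 + 1)) +
          4 * ((-1) ^ p.2 * (p.1.choose p.2 : ℚ) * 4 ^ p.1) := by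
    rintro ⟨i, m⟩ h
    rw [HasAntidiagonal.mem_antidiagonal] at h
    subst h
    have absorption := Nat.add_one_mul_choose_eq i m
    qify at absorption
    push_cast
    field_simp
    linear_combination -(-1) ^ m * 4 ^ (i + 1) * absorption
  have top := sum_antidiagonal_neg_one_pow_mul_choose_mul_four_pow (R := ℚ) (n + 2)
  rw [sum_antidiagonal_add_two] at top
  rw [eq_div_iff (by positivity), mul_comm, mul_sum, sum_congr rfl absorb, sum_add_distrib,
    ← mul_sum, sum_neg_distrib, sum_antidiagonal_neg_one_pow_mul_choose_mul_four_pow]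
  simp only [Nat.choose_zero_succ, Nat.choose_zero_right] at top
  push_cast at top
  linear_combination -top

theorem sum_range_two_pow_div_eq_sum_antidiagonal (n : ℕ) :
    ∑ k ∈ range (n + 1), (2 : ℚ) ^ (k + 1) / (k + 1) =
      ∑ p ∈ antidiagonal n, (-1) ^ p.2 * (p.1.choose p.2 : ℚ) * 4 ^ (p.1 + 1) / (p.1 + 1) / 2 := by
  induction n with
  | zero => norm_num
  | succ n ih =>
    have pascal : ∀ p ∈ antidiagonal n,
        (-1) ^ (p.2 + 1) * (p.1.choose (p.2 + 1) : ℚ) * 4 ^ (p.1 + 1) / (p.1 + 1) / 2 =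
          (-1) ^ p.2 * (p.1.choose p.2 : ℚ) * 4 ^ (p.1 + 1) / (p.1 + 1) / 2 -
            (-1) ^ p.2 * ((p.1 + 1).choose (p.2 + 1) : ℚ) * 4 ^ (p.1 + 1) / (p.1 + 1) / 2 := by
      intro p _
      rw [Nat.choose_succ_succ']
      push_cast
      ring
    rw [sum_range_succ, ih, sum_antidiagonal_succ', sum_congr rfl pascal, sum_sub_distrib]
    simp only [← sum_div]
    rw [sum_antidiagonal_neg_one_pow_mul_choose_succ_mul_four_pow_div, Nat.choose_zero_right]
    push_cast
    field_simp
    ring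

theorem a_eq_factorial_div_mul_sum (n : ℕ) :
    a n = n ! / 2 ^ n * ∑ k ∈ range n, (2 : ℚ) ^ (k + 1) / (k + 1) := by
  induction n with
  | zero => simp [a]
  | succ n ih =>
    rw [a, ih, sum_range_succ, Nat.factorial_succ]
    push_cast
    field_simp
    ring

theorem a_succ_eq (n : ℕ) :
    a (n + 1) = ∑ p ∈ antidiagonal n,
      (-1) ^ p.2 * (p.1.choose p.2 : ℚ) * ((n + 1)! / (p.1 + 1) : ℕ) * 2 ^ (p.1 - p.2) := by
  rw [a_eq_factorial_div_mul_sum, sum_range_two_pow_div_eq_sum_antidiagonal, mul_sum]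
  refine sum_congr rfl fun ⟨i, m⟩ h => ?_
  rw [HasAntidiagonal.mem_antidiagonal] at h
  subst h
  rcases le_or_gt m i with hmi | hmi
  · obtain ⟨d, rfl⟩ := Nat.exists_eq_add_of_le hmi
    rw [Nat.cast_div (Nat.dvd_factorial (by omega) (by omega)) (by positivity),
      Nat.add_sub_cancel_left, show (4 : ℚ) = 2 ^ 2 by norm_num, ← pow_mul]
    push_cast
    field_simp
    ring
  · simp [Nat.choose_eq_zero_of_lt hmi]

theorem stmt_2 (n : ℕ) : ∃ m : ℤ, a n = (m : ℚ) := by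
  cases n with
  | zero => exact ⟨0, by simp [a]⟩
  | succ n =>
    refine ⟨∑ p ∈ antidiagonal n,
      (-1) ^ p.2 * (p.1.choose p.2 : ℤ) * ((n + 1)! / (p.1 + 1) : ℕ) * 2 ^ (p.1 - p.2), ?_⟩
    rw [a_succ_eq]
    push_cast
    rfl
end

section
/- For any positive integer n, the 2-adic valuation of the rational number ∑_{k=1}^{n} 2^k/k is at least s_2(n), the sum of the binary digits of n. -/
/-!
Subtracting the identity `∑_{j ≤ N} C(N, j) x^j / j = ∑_{k ≤ N} ((1 + x)^k - 1) / k` at `x = -1`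
from the one at `x = 1` gives `∑_{k ≤ N} 2^k / k = ∑_{j ≤ N odd} 2 C(N, j) / j`. For `N = 2^n` and
odd `j`, Kummer's theorem gives `ϑ₂(C(2^n, j)) = n`, so the sum up to `2^n` has valuation
`> n ≥ s₂(n)`. Each of the remaining terms `2^k / k` with `n < k ≤ 2^n` has valuation
`k - ϑ₂(k) ≥ s₂(n)`, because `s₂(n) ≤ log₂ n + 1` while `ϑ₂(k) + log₂ n < k` follows from
`2^{ϑ₂(k)} ≤ k`, `2^{log₂ n} < k` and `2m ≤ 2^m`.
-/

open Finset

theorem sum_Icc_one_eq_sum_range {M : Type*} [AddCommMonoid M] (f : ℕ → M) (N : ℕ) :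
    ∑ k ∈ Icc 1 N, f k = ∑ i ∈ range N, f (i + 1) := by
  rw [range_eq_Ico, sum_Ico_add' f 0 N 1]
  rfl

theorem sum_range_choose_succ_mul_pow {R : Type*} [CommRing R] (x : R) (N : ℕ) :
    ∑ i ∈ range N, (N.choose (i + 1) : R) * x ^ (i + 1) = (1 + x) ^ N - 1 := by
  rw [add_comm, add_pow, sum_range_succ']
  simp [mul_comm]

theorem choose_div_succ_eq {K : Type*} [Field K] [CharZero K] (N i : ℕ) :
    (N.choose i : K) / (i + 1 : ℕ) = (N + 1).choose (i + 1) / (N + 1 : ℕ) := by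
  rw [div_eq_div_iff (Nat.cast_ne_zero.mpr i.succ_ne_zero) (Nat.cast_ne_zero.mpr N.succ_ne_zero)]
  exact_mod_cast (mul_comm _ _).trans (Nat.add_one_mul_choose_eq N i)

theorem sum_range_choose_succ_mul_pow_div {K : Type*} [Field K] [CharZero K] (x : K) (N : ℕ) :
    ∑ i ∈ range N, (N.choose (i + 1) : K) * x ^ (i + 1) / (i + 1 : ℕ) =
      ∑ i ∈ range N, ((1 + x) ^ (i + 1) - 1) / (i + 1 : ℕ) := by
  induction N with
  | zero => simp
  | succ N ih =>
    have hPascal : ∀ i ∈ range (N + 1),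
        ((N + 1).choose (i + 1) : K) * x ^ (i + 1) / (i + 1 : ℕ) =
          (N + 1).choose (i + 1) * x ^ (i + 1) / (N + 1 : ℕ) +
            N.choose (i + 1) * x ^ (i + 1) / (i + 1 : ℕ) := by
      intro i _
      conv_lhs => rw [Nat.choose_succ_succ', Nat.cast_add, add_mul, add_div, mul_div_right_comm,
        choose_div_succ_eq, div_mul_eq_mul_div]
    rw [sum_congr rfl hPascal, sum_add_distrib, ← sum_div, sum_range_choose_succ_mul_pow,
      sum_range_succ _ N, Nat.choose_succ_self, ih, sum_range_succ _ N]
    simp [add_comm]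

theorem sum_range_two_pow_div_eq (N : ℕ) :
    ∑ i ∈ range N, (2 : ℚ) ^ (i + 1) / (i + 1 : ℕ) =
      ∑ i ∈ range N, (N.choose (i + 1) : ℚ) * (1 - (-1) ^ (i + 1)) / (i + 1 : ℕ) := by
  have h := congrArg₂ (· - ·) (sum_range_choose_succ_mul_pow_div (1 : ℚ) N)
    (sum_range_choose_succ_mul_pow_div (-1 : ℚ) N)
  simp only [← sum_sub_distrib, ← sub_div] at h
  convert h.symm using 3 <;> ring

theorem eq_zero_or_le_padicValRat_add {p : ℕ} [Fact p.Prime] {c : ℤ} {q r : ℚ}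
    (hq : q = 0 ∨ c ≤ padicValRat p q) (hr : r = 0 ∨ c ≤ padicValRat p r) :
    q + r = 0 ∨ c ≤ padicValRat p (q + r) := by
  by_cases hqr : q + r = 0
  · exact .inl hqr
  right
  rcases hq with rfl | hq
  · rw [zero_add] at hqr ⊢
    exact hr.resolve_left hqr
  rcases hr with rfl | hr
  · rwa [add_zero]
  exact (le_min hq hr).trans (padicValRat.min_le_padicValRat_add hqr)

theorem eq_zero_or_le_padicValRat_sum {p : ℕ} [Fact p.Prime] {c : ℤ} {ι : Type*} {s : Finset ι}
    {F : ι → ℚ} (hF : ∀ i ∈ s, F i = 0 ∨ c ≤ padicValRat p (F i)) :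
    ∑ i ∈ s, F i = 0 ∨ c ≤ padicValRat p (∑ i ∈ s, F i) :=
  sum_induction F (fun q ↦ q = 0 ∨ c ≤ padicValRat p q)
    (fun _ _ ↦ eq_zero_or_le_padicValRat_add) (.inl rfl) hF

theorem padicValNat_choose_prime_pow_add {p n k : ℕ} [hp : Fact p.Prime] (hk0 : k ≠ 0)
    (hkn : k ≤ p ^ n) : padicValNat p ((p ^ n).choose k) + padicValNat p k = n := by
  simpa only [Nat.factorization_def _ hp.out] using
    Nat.factorization_choose_prime_pow_add_factorization hp.out hkn hk0

theorem padicValRat_two_two : padicValRat 2 2 = 1 := by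
  simpa using padicValRat.self (p := 2) one_lt_two

theorem eq_zero_or_le_padicValRat_choose_mul_div (M i : ℕ) (hi : i < 2 ^ M) :
    ((2 ^ M).choose (i + 1) : ℚ) * (1 - (-1) ^ (i + 1)) / (i + 1 : ℕ) = 0 ∨
      (M : ℤ) + 1 ≤
        padicValRat 2 (((2 ^ M).choose (i + 1) : ℚ) * (1 - (-1) ^ (i + 1)) / (i + 1 : ℕ)) := by
  rcases Nat.even_or_odd (i + 1) with heven | hodd
  · left
    simp [heven.neg_one_pow]
  right
  have hC := padicValNat_choose_prime_pow_add (p := 2) (Nat.add_one_ne_zero i) hi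
  have hj : padicValNat 2 (i + 1) = 0 := padicValNat.eq_zero_of_not_dvd hodd.not_two_dvd_nat
  have hC0 : ((2 ^ M).choose (i + 1) : ℚ) ≠ 0 := Nat.cast_ne_zero.mpr (Nat.choose_pos hi).ne'
  rw [hodd.neg_one_pow, show (1 : ℚ) - -1 = 2 by norm_num,
    padicValRat.div (mul_ne_zero hC0 two_ne_zero) (Nat.cast_ne_zero.mpr (Nat.add_one_ne_zero i)),
    padicValRat.mul hC0 two_ne_zero, padicValRat.of_nat, padicValRat.of_nat, padicValRat_two_two]
  omega

theorem digits_two_sum_le_log (n : ℕ) : (Nat.digits 2 n).sum ≤ Nat.log 2 n + 1 := by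
  rcases n.eq_zero_or_pos with rfl | hn
  · simp
  rw [← Nat.length_digits 2 n one_lt_two hn.ne']
  simpa using List.sum_le_card_nsmul _ 1 fun d hd ↦
    Nat.lt_succ_iff.mp (Nat.digits_lt_base one_lt_two hd)

theorem padicValNat_two_add_log_lt {n k : ℕ} (hnk : n < k) :
    padicValNat 2 k + Nat.log 2 n < k := by
  have h2 : ∀ m : ℕ, 2 * m ≤ 2 ^ m := fun m ↦ by
    simpa using Nat.mul_le_pow (by norm_num : 2 ≠ 1) m
  have hk : 2 ^ padicValNat 2 k ≤ k := Nat.le_of_dvd (by omega) pow_padicValNat_dvd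
  rcases n.eq_zero_or_pos with rfl | hn
  · simpa using Nat.lt_two_pow_self.trans_le hk
  have hn : 2 ^ Nat.log 2 n < k := (Nat.pow_log_le_self 2 hn.ne').trans_lt hnk
  rcases le_or_gt (padicValNat 2 k) (Nat.log 2 n) with h | h
  · have := h2 (Nat.log 2 n); omega
  · have := h2 (padicValNat 2 k); omega

theorem digits_two_sum_le_padicValRat_two_pow_div {n k : ℕ} (hnk : n < k) :
    ((Nat.digits 2 n).sum : ℤ) ≤ padicValRat 2 ((2 : ℚ) ^ k / k) := by
  rw [padicValRat.div (by positivity) (Nat.cast_ne_zero.mpr (by omega)), padicValRat.pow,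
    padicValRat_two_two, padicValRat.of_nat]
  have := digits_two_sum_le_log n
  have := padicValNat_two_add_log_lt hnk
  omega

theorem eq_zero_or_lt_padicValRat_sum_range_two_pow_div (M : ℕ) :
    ∑ i ∈ range (2 ^ M), (2 : ℚ) ^ (i + 1) / (i + 1 : ℕ) = 0 ∨
      (M : ℤ) < padicValRat 2 (∑ i ∈ range (2 ^ M), (2 : ℚ) ^ (i + 1) / (i + 1 : ℕ)) := by
  rw [sum_range_two_pow_div_eq, Int.lt_iff_add_one_le]
  exact eq_zero_or_le_padicValRat_sum fun i hi ↦
    eq_zero_or_le_padicValRat_choose_mul_div M i (mem_range.mp hi)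

open Finset in
theorem stmt_3 (n : ℕ) (hn : 0 < n) :
    padicValRat 2 (∑ k ∈ Finset.Icc 1 n, (2 ^ k / (k : ℚ))) ≥ ((Nat.digits 2 n).sum : ℤ) := by
  set f : ℕ → ℚ := fun i ↦ 2 ^ (i + 1) / (i + 1 : ℕ)
  have hpos : 0 < ∑ i ∈ range n, f i :=
    sum_pos (fun i _ ↦ by positivity) (nonempty_range_iff.mpr hn.ne')
  have hsplit : ∑ i ∈ range n, f i = ∑ i ∈ range (2 ^ n), f i + -∑ i ∈ Ico n (2 ^ n), f i := by
    rw [← sum_range_add_sum_Ico f Nat.lt_two_pow_self.le]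
    ring
  have hhead := (eq_zero_or_lt_padicValRat_sum_range_two_pow_div n).imp_right fun h ↦
    (Int.ofNat_le.mpr (Nat.digit_sum_le 2 n)).trans h.le
  have htail : ∑ i ∈ Ico n (2 ^ n), f i = 0 ∨
      ((Nat.digits 2 n).sum : ℤ) ≤ padicValRat 2 (∑ i ∈ Ico n (2 ^ n), f i) :=
    eq_zero_or_le_padicValRat_sum fun i hi ↦ .inr <| by
      simpa [f] using
        digits_two_sum_le_padicValRat_two_pow_div (Nat.lt_succ_of_le (mem_Ico.mp hi).1)
  rw [sum_Icc_one_eq_sum_range, ge_iff_le]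
  change _ ≤ padicValRat 2 (∑ i ∈ range n, f i)
  rw [hsplit]
  refine (eq_zero_or_le_padicValRat_add hhead ?_).resolve_left (hsplit ▸ hpos.ne')
  rwa [neg_eq_zero, padicValRat.neg]
end

section
/- For any positive integer n, (n!/2^n) · ∑_{k=1}^{n} 2^k/k is an integer. -/
/-!
Write `B n = ∑_{i+j=n} i! j!`. Splitting `B (n+1)` once at the first and once at the second
factor gives `2 B(n+1) = (n+2) B n + 2 (n+1)!`, since `(i+1)! j! + i! (j+1)! = (n+2) i! j!`
when `i + j = n`. The rational numbers `(n+1)! ∑_{k=1}^{n+1} 2^k/k` satisfy the same recursion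
after division by `2^(n+1)`, so `(n+1)!/2^(n+1) · ∑_{k=1}^{n+1} 2^k/k = B n` is an integer.
-/

open Finset Nat

def factorialConvolution (n : ℕ) : ℕ := ∑ p ∈ antidiagonal n, p.1 ! * p.2 !

theorem two_mul_factorialConvolution_succ (n : ℕ) :
    2 * factorialConvolution (n + 1) = (n + 2) * factorialConvolution n + 2 * (n + 1)! := by
  have hsplit : ∑ p ∈ antidiagonal n, ((p.1 + 1)! * p.2 ! + p.1 ! * (p.2 + 1)!)
      = (n + 2) * factorialConvolution n := by
    rw [factorialConvolution, mul_sum]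
    refine sum_congr rfl fun p hp => ?_
    rw [HasAntidiagonal.mem_antidiagonal] at hp
    rw [factorial_succ, factorial_succ, ← hp]
    ring
  have hfirst := sum_antidiagonal_succ (f := fun p : ℕ × ℕ => p.1 ! * p.2 !) (n := n)
  have hsecond := sum_antidiagonal_succ' (f := fun p : ℕ × ℕ => p.1 ! * p.2 !) (n := n)
  simp only [factorial_zero, one_mul, mul_one] at hfirst hsecond
  rw [sum_add_distrib] at hsplit
  rw [factorialConvolution]
  omega

theorem factorial_mul_sum_two_pow_div (n : ℕ) :
    ((n + 1)! : ℚ) * ∑ k ∈ Icc 1 (n + 1), (2 : ℚ) ^ k / k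
      = 2 ^ (n + 1) * factorialConvolution n := by
  induction n with
  | zero => norm_num [factorialConvolution]
  | succ n ih =>
    have hrec : (2 * factorialConvolution (n + 1) : ℚ)
        = (n + 2) * factorialConvolution n + 2 * (n + 1)! := by
      exact_mod_cast two_mul_factorialConvolution_succ n
    rw [sum_Icc_succ_top (by omega), factorial_succ, cast_mul, mul_add, mul_assoc, ih]
    push_cast
    field_simp
    linear_combination -(2 : ℚ) ^ (n + 1) * hrec

open Finset in
theorem stmt_4_general (n : ℕ) :
    ∃ m : ℤ, ((Nat.factorial n : ℚ) / 2 ^ n) * ∑ k ∈ Finset.Icc 1 n, (2 ^ k / (k : ℚ)) = (m : ℚ) := by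
  cases n with
  | zero => exact ⟨0, by simp⟩
  | succ n =>
    refine ⟨factorialConvolution n, ?_⟩
    rw [div_mul_eq_mul_div, factorial_mul_sum_two_pow_div, mul_div_cancel_left₀ _ (by positivity)]
    rfl

open Finset in
theorem stmt_4 (n : ℕ) (hn : 0 < n) :
    ∃ m : ℤ, ((Nat.factorial n : ℚ) / 2 ^ n) * ∑ k ∈ Finset.Icc 1 n, (2 ^ k / (k : ℚ)) = (m : ℚ) :=
  stmt_4_general n
end

section
/- The exponential generating function of the sequence (a_n) equals -2·log(1-x)/(2-x); that is, as formal power series, ∑_{n≥0} a_n x^n/n! = (-2·log(1-x))/(2-x), equivalently (2-x)·∑_{n≥0} a_n x^n/n! = -2·∑_{k≥1} x^k/k. -/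
namespace PowerSeries

variable {R : Type*} [CommRing R]

theorem coeff_zero_two_sub_X_mul (f : ℕ → R) :
    coeff 0 ((2 - X) * mk f) = 2 * f 0 := by
  simp [sub_mul, ← map_ofNat C 2]

theorem coeff_succ_two_sub_X_mul (f : ℕ → R) (n : ℕ) :
    coeff (n + 1) ((2 - X) * mk f) = 2 * f (n + 1) - f n := by
  rw [sub_mul, map_sub, ← map_ofNat C 2, coeff_C_mul, coeff_succ_X_mul, coeff_mk, coeff_mk]

end PowerSeries

theorem two_mul_a_succ_div_factorial_sub (n : ℕ) :
    2 * (a (n + 1) / (n + 1).factorial) - a n / n.factorial = 2 * (1 / ((n + 1 : ℕ) : ℚ)) := by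
  rw [a, Nat.factorial_succ]
  push_cast
  field_simp
  ring

open PowerSeries in
theorem stmt_9 :
    (2 - PowerSeries.X) * (PowerSeries.mk fun n => a n / (Nat.factorial n : ℚ)) =
      2 * PowerSeries.mk (fun k => if k = 0 then 0 else 1 / (k : ℚ)) := by
  ext (_ | n)
  · rw [coeff_zero_two_sub_X_mul]
    simp [a]
  · rw [coeff_succ_two_sub_X_mul, two_mul_a_succ_div_factorial_sub, ← map_ofNat C 2, coeff_C_mul,
      coeff_mk, if_neg n.succ_ne_zero]
end

section
/- The sequence a_n = (n!/2^n)·∑_{k=1}^{n} 2^k/k satisfies a_n ~ 2·(n-1)! as n → ∞, i.e., lim_{n→∞} a_n/(2·(n-1)!) = 1. -/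
/-!
Since `n! / (2 (n-1)!) = n / 2`, the quotient is `b n = n S n / 2^(n+1)` (`normalizedSum`), where
`S n = ∑_{k=1}^n 2^k / k`. From `S (n+1) = S n + 2^(n+1) / (n+1)` the error `e n = b n - 1`
satisfies `e (n+1) = (n+1)/(2n) · e n + 1/(2n)`: a contraction by roughly `1/2` plus a term of
order `1/n`, so by induction `|e n| ≤ 4/n` once `n ≥ 4`.
-/

open Finset Filter

noncomputable def harmonicTwoPowSum (n : ℕ) : ℝ := ∑ k ∈ Icc 1 n, (2 ^ k / (k : ℝ))

lemma harmonicTwoPowSum_succ (n : ℕ) :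
    harmonicTwoPowSum (n + 1) = harmonicTwoPowSum n + 2 ^ (n + 1) / ((n : ℝ) + 1) := by
  rw [harmonicTwoPowSum, sum_Icc_succ_top (by omega)]
  push_cast
  rfl

noncomputable def normalizedSum (n : ℕ) : ℝ := n * harmonicTwoPowSum n / 2 ^ (n + 1)

lemma normalizedSum_four : normalizedSum 4 = 4 / 3 := by
  norm_num [normalizedSum, harmonicTwoPowSum, sum_Icc_succ_top]

lemma normalizedSum_succ_sub_one {n : ℕ} (hn : n ≠ 0) :
    normalizedSum (n + 1) - 1 = ((n + 1) / (2 * n)) * (normalizedSum n - 1) + 1 / (2 * n) := by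
  have hn' : (n : ℝ) ≠ 0 := Nat.cast_ne_zero.mpr hn
  rw [normalizedSum, normalizedSum, harmonicTwoPowSum_succ]
  push_cast
  field_simp
  ring

lemma abs_normalizedSum_sub_one_le {n : ℕ} (hn : 4 ≤ n) :
    |normalizedSum n - 1| ≤ 4 / n := by
  induction n, hn using Nat.le_induction with
  | base => norm_num [normalizedSum_four, abs_of_pos]
  | succ n hn ih =>
    have hn4 : (4 : ℝ) ≤ n := by exact_mod_cast hn
    have hn0 : (0 : ℝ) < n := by linarith
    calc |normalizedSum (n + 1) - 1|
        = |((n + 1) / (2 * n)) * (normalizedSum n - 1) + 1 / (2 * n)| := by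
          rw [normalizedSum_succ_sub_one (by omega)]
      _ ≤ ((n + 1) / (2 * n)) * |normalizedSum n - 1| + 1 / (2 * n) := by
          refine (abs_add_le _ _).trans ?_
          rw [abs_mul, abs_of_pos (a := ((n : ℝ) + 1) / (2 * n)) (by positivity),
            abs_of_pos (a := 1 / (2 * (n : ℝ))) (by positivity)]
      _ ≤ ((n + 1) / (2 * n)) * (4 / n) + 1 / (2 * n) := by gcongr
      _ ≤ 4 / ((n : ℕ) + 1 : ℕ) := by
          rw [div_mul_div_comm, div_add_div _ _ (by positivity) (by positivity),
            div_le_div_iff₀ (by positivity) (by positivity)]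
          push_cast
          nlinarith [mul_nonneg (mul_nonneg hn0.le (sub_nonneg.2 hn4)) (by positivity : (0 : ℝ) ≤ n + 1)]

lemma tendsto_normalizedSum : Tendsto normalizedSum atTop (nhds 1) := by
  rw [tendsto_iff_norm_sub_tendsto_zero]
  refine squeeze_zero_norm' ?_ (tendsto_const_div_atTop_nhds_zero_nat 4)
  filter_upwards [eventually_ge_atTop 4] with n hn
  simpa using abs_normalizedSum_sub_one_le hn

lemma factorial_mul_div_eq_normalizedSum {n : ℕ} (hn : n ≠ 0) :
    ((n.factorial : ℝ) / 2 ^ n * harmonicTwoPowSum n) / (2 * (n - 1).factorial : ℝ) = normalizedSum n := by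
  obtain ⟨m, rfl⟩ := Nat.exists_eq_succ_of_ne_zero hn
  rw [normalizedSum, Nat.succ_sub_one, Nat.factorial_succ]
  push_cast
  field_simp
  ring

open Finset Filter in
theorem stmt_10 :
    Filter.Tendsto
      (fun n : ℕ =>
        (((Nat.factorial n : ℝ) / 2 ^ n) * ∑ k ∈ Finset.Icc 1 n, (2 ^ k / (k : ℝ))) /
          (2 * (Nat.factorial (n - 1) : ℝ)))
      Filter.atTop (nhds 1) := by
  refine tendsto_normalizedSum.congr' ?_
  filter_upwards [eventually_ne_atTop 0] with n hn
  exact (factorial_mul_div_eq_normalizedSum hn).symm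
end

section
/- The sequence ∑_{k=1}^{n} 2^k/k is asymptotically equivalent to 2^{n+1}/n as n → ∞; that is, lim_{n→∞} (n/2^{n+1})·∑_{k=1}^{n} 2^k/k = 1. -/
/-!
Reflecting the summation index, `n / x ^ n * ∑_{k=1}^n x ^ k / k = ∑_{j<n} n / (n - j) * x⁻¹ ^ j`.
Each weight `n / (n - j)` tends to `1` and is bounded by `j + 1`, so by Tannery's theorem
(dominated convergence for series) the sum tends to `∑ j, x⁻¹ ^ j = x / (x - 1)` whenever
`|x| > 1`. For `x = 2` this limit is `2`, and the extra factor `1 / 2` gives `1`.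
-/

open Finset Filter Topology

-- For `j ≥ n` the natural subtraction gives `n - j = 0`, so the term vanishes by `n / 0 = 0`.
noncomputable def reflectedTerm (r : ℝ) (n j : ℕ) : ℝ := n / (n - j : ℕ) * r ^ j

lemma reflectedTerm_eq_zero_of_le {r : ℝ} {n j : ℕ} (h : n ≤ j) : reflectedTerm r n j = 0 := by
  simp [reflectedTerm, Nat.sub_eq_zero_of_le h]

lemma tsum_reflectedTerm {x : ℝ} (hx : x ≠ 0) (n : ℕ) :
    ∑' j, reflectedTerm x⁻¹ n j = n / x ^ n * ∑ k ∈ Icc 1 n, x ^ k / k := by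
  have hreflect := sum_Ico_reflect (fun k : ℕ ↦ x ^ k / k) 0 (Nat.le_succ n)
  rw [Nat.add_sub_cancel_left, Nat.sub_zero, Ico_add_one_right_eq_Icc,
    Nat.Ico_zero_eq_range] at hreflect
  rw [tsum_eq_sum (s := range n) fun j hj ↦ reflectedTerm_eq_zero_of_le (by simpa using hj),
    ← hreflect, mul_sum]
  refine sum_congr rfl fun j hj ↦ ?_
  rw [reflectedTerm, pow_sub₀ _ hx (mem_range.1 hj).le, inv_pow]
  field_simp

lemma tendsto_reflectedTerm (r : ℝ) (j : ℕ) :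
    Tendsto (fun n ↦ reflectedTerm r n j) atTop (𝓝 (r ^ j)) := by
  have hratio : Tendsto (fun n : ℕ ↦ 1 + (j : ℝ) / (n - j : ℕ)) atTop (𝓝 1) := by
    simpa using ((tendsto_const_div_atTop_nhds_zero_nat (j : ℝ)).comp
      (tendsto_sub_atTop_nat j)).const_add 1
  rw [← one_mul (r ^ j)]
  refine (hratio.mul_const (r ^ j)).congr' ?_
  filter_upwards [eventually_gt_atTop j] with n hn
  have hpos : (0 : ℝ) < (n - j : ℕ) := by exact_mod_cast Nat.sub_pos_of_lt hn
  rw [reflectedTerm]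
  field_simp
  push_cast [Nat.cast_sub hn.le]
  ring

lemma abs_reflectedTerm_le {r : ℝ} (n j : ℕ) : |reflectedTerm r n j| ≤ (j + 1) * |r| ^ j := by
  rcases le_or_gt n j with hnj | hjn
  · rw [reflectedTerm_eq_zero_of_le hnj, abs_zero]
    positivity
  have hpos : (1 : ℝ) ≤ (n - j : ℕ) := by exact_mod_cast Nat.sub_pos_of_lt hjn
  have hratio : (n : ℝ) / (n - j : ℕ) ≤ j + 1 := by
    rw [div_le_iff₀ (one_pos.trans_le hpos)]
    rw [Nat.cast_sub hjn.le] at hpos ⊢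
    nlinarith [(Nat.cast_nonneg j : (0 : ℝ) ≤ j)]
  rw [reflectedTerm, abs_mul, abs_pow, abs_of_nonneg (by positivity)]
  gcongr

lemma tendsto_div_pow_mul_sum_pow_div {x : ℝ} (hx : 1 < |x|) :
    Tendsto (fun n : ℕ ↦ n / x ^ n * ∑ k ∈ Icc 1 n, x ^ k / k) atTop (𝓝 (x / (x - 1))) := by
  have hx0 : x ≠ 0 := abs_pos.1 (one_pos.trans hx)
  have hr : |x⁻¹| < 1 := by rw [abs_inv]; exact inv_lt_one_of_one_lt₀ hx
  have hbound : Summable fun j : ℕ ↦ (j + 1) * |x⁻¹| ^ j := by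
    have hr' : ‖|x⁻¹|‖ < 1 := by rwa [Real.norm_eq_abs, abs_abs]
    refine ((summable_pow_mul_geometric_of_norm_lt_one 1 hr').add
      (summable_geometric_of_lt_one (abs_nonneg _) hr)).congr fun j ↦ ?_
    simp only [pow_one]
    ring
  have hlim := tendsto_tsum_of_dominated_convergence (G := ℝ) hbound (tendsto_reflectedTerm x⁻¹)
    (.of_forall fun n j ↦ abs_reflectedTerm_le n j)
  rw [tsum_geometric_of_abs_lt_one hr] at hlim
  convert hlim using 1
  · exact funext fun n ↦ (tsum_reflectedTerm hx0 n).symm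
  · field_simp

open Finset Filter in
theorem stmt_11 :
    Filter.Tendsto
      (fun n : ℕ => ((n : ℝ) / 2 ^ (n + 1)) * ∑ k ∈ Finset.Icc 1 n, (2 ^ k / (k : ℝ)))
      Filter.atTop (nhds 1) := by
  have h := (tendsto_div_pow_mul_sum_pow_div (x := 2) (by norm_num)).const_mul (1 / 2 : ℝ)
  norm_num at h
  refine h.congr fun n ↦ ?_
  rw [pow_succ]
  ring
end

section
/- For every positive integer ℓ, the Genocchi number G_{2ℓ} has sign (-1)^ℓ, i.e., (-1)^ℓ · G_{2ℓ} > 0. -/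
open PowerSeries

lemma rescale_two_bernoulliPowerSeries_mul_exp_sq_sub_one :
    rescale (2 : ℚ) (bernoulliPowerSeries ℚ) * (exp ℚ ^ 2 - 1) = 2 * X := by
  have h := congrArg (rescale (2 : ℚ)) (bernoulliPowerSeries_mul_exp_sub_one ℚ)
  rwa [map_mul, map_sub, map_one, rescale_X, ← Nat.cast_ofNat, ← exp_pow_eq_rescale_exp,
    Nat.cast_ofNat, map_ofNat] at h

lemma two_mul_X_mul_inv_exp_add_one :
    2 * X * (exp ℚ + 1)⁻¹ =
      2 * bernoulliPowerSeries ℚ - 2 * rescale (2 : ℚ) (bernoulliPowerSeries ℚ) := by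
  refine ((eq_mul_inv_iff_mul_eq (by simp)).mpr ?_).symm
  have hexp : (exp ℚ - 1 : ℚ⟦X⟧) ≠ 0 := fun h ↦ by
    simpa [coeff_exp] using congrArg (coeff (R := ℚ) 1) h
  refine mul_right_cancel₀ hexp ?_
  linear_combination (2 * (exp ℚ + 1)) * bernoulliPowerSeries_mul_exp_sub_one ℚ -
    2 * rescale_two_bernoulliPowerSeries_mul_exp_sq_sub_one

lemma genocchi_eq_two_mul_one_sub_two_pow_mul_bernoulli (n : ℕ) :
    genocchi n = 2 * (1 - 2 ^ n) * bernoulli n := by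
  have hfac : (n.factorial : ℚ) ≠ 0 := by exact_mod_cast n.factorial_ne_zero
  rw [genocchi, two_mul_X_mul_inv_exp_add_one, map_sub, two_mul, two_mul, map_add, map_add,
    coeff_rescale, bernoulliPowerSeries, coeff_mk, eq_ratCast, Rat.cast_id]
  field_simp
  ring

lemma neg_one_pow_succ_mul_bernoulli_two_mul_pos {k : ℕ} (hk : k ≠ 0) :
    0 < (-1 : ℚ) ^ (k + 1) * bernoulli (2 * k) := by
  have hs := hasSum_zeta_nat hk
  have hzeta : 0 < ∑' n : ℕ, 1 / (n : ℝ) ^ (2 * k) :=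
    hs.summable.tsum_pos (fun _ ↦ by positivity) 1 (by norm_num)
  rw [hs.tsum_eq, show ∀ a b c d e : ℝ, a * b * c * d / e = b * (c / e) * (a * d) by
    intros; ring] at hzeta
  have hcoeff : (0 : ℝ) < 2 ^ (2 * k - 1) * (Real.pi ^ (2 * k) / (2 * k).factorial) := by
    positivity
  exact_mod_cast pos_of_mul_pos_right hzeta hcoeff.le

theorem stmt_16 (ℓ : ℕ) (hℓ : 1 ≤ ℓ) : (-1 : ℚ) ^ ℓ * genocchi (2 * ℓ) > 0 := by
  have hB := neg_one_pow_succ_mul_bernoulli_two_mul_pos (k := ℓ) (by omega)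
  have hpow : (1 : ℚ) < 2 ^ (2 * ℓ) := one_lt_pow₀ (by norm_num) (by omega)
  have hG : (-1 : ℚ) ^ ℓ * genocchi (2 * ℓ) =
      2 * (2 ^ (2 * ℓ) - 1) * ((-1) ^ (ℓ + 1) * bernoulli (2 * ℓ)) := by
    rw [genocchi_eq_two_mul_one_sub_two_pow_mul_bernoulli, pow_succ]
    ring
  rw [hG]
  exact mul_pos (by linarith) hB
end
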